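/- arXiv:1709.04138 — 3 statements merged into one kernel-verified Lean document; each statement's English description precedes it below -/
import Mathlib

section
/- Let 0 < q < 1, k ≥ 0, 0 ≤ α < 1, λ ≥ -1, and Φ_2 = ([2]_q(1+k) - k - α)·Ψ_q(2,λ) with Ψ_q(2,λ) = Γ_q(2+λ)/Γ_q(1+λ). Let f(z) = z + ∑_{n≥2} a_n z^n satisfy ∑_{n≥2} Φ_n |a_n| ≤ 1 - α where Φ_n = ([n]_q(1+k) - k - α)Ψ_q(n,λ) is increasing in n. Then for all z in the unit disc, Re(1 + (Φ_2/(1-α+Φ_2)) ∑_{n≥1} a_n z^n) > 0, where a_1 = 1. -/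
/-!
Since `Φ_n ≥ Φ_2 > 0`, the coefficient condition gives `Φ_2 ∑_{n≥2} |a_n| ≤ 1 - α`, so on the
unit disc `|∑_{n≥1} a_n z^n| < 1 + (1 - α)/Φ_2`. The factor `Φ_2/(1 - α + Φ_2)` therefore
scales the series into the open unit disc, and `Re (1 + w) > 0` whenever `|w| < 1`.
-/

open Metric

noncomputable def qFact (q : ℝ) (n : ℕ) : ℝ :=
  ∏ i ∈ Finset.range n, (1 - q ^ (i + 1)) / (1 - q)

noncomputable def Psi (q lam : ℝ) (Γq : ℝ → ℝ) (n : ℕ) : ℝ :=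
  Γq ((n : ℝ) + lam) / (qFact q (n - 1) * Γq (1 + lam))

noncomputable def Phi (q k α lam : ℝ) (Γq : ℝ → ℝ) (n : ℕ) : ℝ :=
  (((1 - q ^ n) / (1 - q)) * (1 + k) - k - α) * Psi q lam Γq n

section WeightedSums

variable {ι : Type*} {w b : ι → ℝ} {c : ℝ}

lemma summable_of_summable_weighted (hc : 0 < c) (hw : ∀ i, c ≤ w i) (hb : ∀ i, 0 ≤ b i)
    (hs : Summable fun i => w i * b i) : Summable b := by
  refine (hs.mul_left c⁻¹).of_nonneg_of_le hb fun i => ?_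
  rw [← mul_le_mul_iff_right₀ hc, ← mul_assoc, mul_inv_cancel₀ hc.ne', one_mul]
  exact mul_le_mul_of_nonneg_right (hw i) (hb i)

lemma mul_tsum_le_tsum_weighted (hc : 0 < c) (hw : ∀ i, c ≤ w i) (hb : ∀ i, 0 ≤ b i)
    (hs : Summable fun i => w i * b i) : c * ∑' i, b i ≤ ∑' i, w i * b i := by
  rw [← tsum_mul_left]
  exact ((summable_of_summable_weighted hc hw hb hs).mul_left c).tsum_le_tsum
    (fun i => mul_le_mul_of_nonneg_right (hw i) (hb i)) hs

end WeightedSums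

section PowerSeries

variable {𝕜 : Type*} [NormedDivisionRing 𝕜] {f : ℕ → 𝕜} {z : 𝕜}

lemma norm_mul_pow_le_norm (hz : ‖z‖ ≤ 1) (x : 𝕜) (m : ℕ) : ‖x * z ^ m‖ ≤ ‖x‖ := by
  rw [norm_mul, norm_pow]
  exact mul_le_of_le_one_right (norm_nonneg x) (pow_le_one₀ (norm_nonneg z) hz)

lemma summable_norm_mul_pow (hf : Summable fun n => ‖f n‖) (hz : ‖z‖ ≤ 1) (m : ℕ → ℕ) :
    Summable fun n => ‖f n * z ^ m n‖ :=
  hf.of_nonneg_of_le (fun _ => norm_nonneg _) fun _ => norm_mul_pow_le_norm hz _ _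

lemma norm_tsum_mul_pow_le (hf : Summable fun n => ‖f n‖) (hz : ‖z‖ ≤ 1) (m : ℕ → ℕ) :
    ‖∑' n, f n * z ^ m n‖ ≤ ∑' n, ‖f n‖ :=
  (norm_tsum_le_tsum_norm (summable_norm_mul_pow hf hz m)).trans <|
    (summable_norm_mul_pow hf hz m).tsum_le_tsum (fun _ => norm_mul_pow_le_norm hz _ _) hf

lemma norm_tsum_mul_pow_succ_le [CompleteSpace 𝕜] (hf : Summable fun n => ‖f (n + 2)‖)
    (hz : ‖z‖ ≤ 1) :
    ‖∑' n, f (n + 1) * z ^ (n + 1)‖ ≤ ‖f 1‖ * ‖z‖ + ∑' n, ‖f (n + 2)‖ := by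
  have htail : Summable fun n => f (n + 1 + 1) * z ^ (n + 1 + 1) := by
    simpa only [add_assoc] using (summable_norm_mul_pow hf hz (· + 2)).of_norm
  have hsplit := tsum_eq_zero_add' (f := fun n => f (n + 1) * z ^ (n + 1)) htail
  simp only [zero_add, pow_one, add_assoc, Nat.reduceAdd] at hsplit
  calc ‖∑' n, f (n + 1) * z ^ (n + 1)‖ = ‖f 1 * z + ∑' n, f (n + 2) * z ^ (n + 2)‖ := by
        rw [hsplit]
    _ ≤ ‖f 1 * z‖ + ‖∑' n, f (n + 2) * z ^ (n + 2)‖ := norm_add_le _ _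
    _ ≤ ‖f 1‖ * ‖z‖ + ∑' n, ‖f (n + 2)‖ := by
        rw [norm_mul]
        gcongr
        exact norm_tsum_mul_pow_le hf hz (· + 2)

end PowerSeries

lemma Complex.re_one_add_pos_of_norm_lt_one {w : ℂ} (hw : ‖w‖ < 1) : 0 < (1 + w).re := by
  have := neg_le_of_abs_le (Complex.abs_re_le_norm w)
  rw [Complex.add_re, Complex.one_re]
  linarith

theorem re_positivity_subordination_general (q k α lam : ℝ)
    (Γq : ℝ → ℝ)
    (hΦ2 : 0 < Phi q k α lam Γq 2)
    (hΦmono : ∀ n : ℕ, 2 ≤ n → Phi q k α lam Γq 2 ≤ Phi q k α lam Γq n)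
    (a : ℕ → ℂ) (ha1 : a 1 = 1)
    (hsum : Summable (fun n : ℕ => Phi q k α lam Γq (n + 2) * ‖a (n + 2)‖))
    (hbound : (∑' n : ℕ, Phi q k α lam Γq (n + 2) * ‖a (n + 2)‖) ≤ 1 - α) :
    ∀ z ∈ ball (0 : ℂ) 1,
      0 < (1 + ((Phi q k α lam Γq 2 / (1 - α + Phi q k α lam Γq 2) : ℝ) : ℂ)
            * ∑' n : ℕ, a (n + 1) * z ^ (n + 1)).re := by
  intro z hz
  rw [mem_ball, dist_zero_right] at hz
  set Φ2 := Phi q k α lam Γq 2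
  have hw : ∀ n, Φ2 ≤ Phi q k α lam Γq (n + 2) := fun n => hΦmono (n + 2) (by omega)
  have hA := summable_of_summable_weighted hΦ2 hw (fun _ => norm_nonneg _) hsum
  set A := ∑' n, ‖a (n + 2)‖
  have hΦA : Φ2 * A ≤ 1 - α :=
    (mul_tsum_le_tsum_weighted hΦ2 hw (fun _ => norm_nonneg _) hsum).trans hbound
  have hA0 : 0 ≤ A := tsum_nonneg fun _ => norm_nonneg _
  have hS := norm_tsum_mul_pow_succ_le hA hz.le
  rw [ha1, norm_one, one_mul] at hS
  have hden : 0 < 1 - α + Φ2 := by nlinarith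
  apply Complex.re_one_add_pos_of_norm_lt_one
  rw [norm_mul, Complex.norm_real, Real.norm_of_nonneg (div_pos hΦ2 hden).le,
    div_mul_eq_mul_div, div_lt_one hden]
  nlinarith [norm_nonneg z]

/-- The positivity of the real part appearing in the subordination theorem. -/
theorem re_positivity_subordination (q k α lam : ℝ)
    (hq0 : 0 < q) (hq1 : q < 1) (hk : 0 ≤ k) (hα0 : 0 ≤ α) (hα1 : α < 1)
    (hlam : -1 ≤ lam)
    (Γq : ℝ → ℝ) (hΓ1 : Γq 1 = 1)
    (hΓ : ∀ t : ℝ, 0 < t → Γq (t + 1) = (1 - q ^ t) / (1 - q) * Γq t)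
    (hΦ2 : 0 < Phi q k α lam Γq 2)
    (hΦmono : ∀ n : ℕ, 2 ≤ n → Phi q k α lam Γq 2 ≤ Phi q k α lam Γq n)
    (a : ℕ → ℂ) (ha1 : a 1 = 1)
    (hsum : Summable (fun n : ℕ => Phi q k α lam Γq (n + 2) * ‖a (n + 2)‖))
    (hbound : (∑' n : ℕ, Phi q k α lam Γq (n + 2) * ‖a (n + 2)‖) ≤ 1 - α) :
    ∀ z ∈ ball (0 : ℂ) 1,
      0 < (1 + ((Phi q k α lam Γq 2 / (1 - α + Phi q k α lam Γq 2) : ℝ) : ℂ)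
            * ∑' n : ℕ, a (n + 1) * z ^ (n + 1)).re :=
  re_positivity_subordination_general q k α lam Γq hΦ2 hΦmono a ha1 hsum hbound
end

section
/- For β > 0 and F(z) = z - (1/β) z², inf_{|z|<1} Re( β/(2(1+β)) · F(z) ) = -1/2, attained in the limit z → -1. -/
open Metric

/-- For `β > 0` and `F(z) = z - z²/β`, the infimum over the unit disc of
`Re(β/(2(1+β)) ⬝ F(z))` equals `-1/2`, showing the constant is best possible. -/
theorem best_constant (β : ℝ) (hβ : 0 < β) :
    IsGLB ((fun z : ℂ =>
        (((β / (2 * (1 + β)) : ℝ) : ℂ) * (z - z ^ 2 / (β : ℂ))).re) ''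
      ball (0 : ℂ) 1) (-(1 / 2)) := by
  have hb2 : (0:ℝ) < 2 * (1 + β) := by linarith
  constructor
  · rintro r ⟨z, hz, rfl⟩
    rw [mem_ball_zero_iff] at hz
    set x := z.re
    set y := z.im
    have hxy : x ^ 2 + y ^ 2 < 1 := by
      have h1 : ‖z‖ < 1 := hz
      have h2 := Complex.sq_norm z
      rw [Complex.normSq_apply] at h2
      nlinarith [norm_nonneg z]
    show -(1/2) ≤ (((β / (2 * (1 + β)) : ℝ) : ℂ) * (z - z ^ 2 / (β : ℂ))).re
    have hre : ((((β / (2 * (1 + β)) : ℝ) : ℂ) * (z - z ^ 2 / (β : ℂ))).re)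
        = β / (2 * (1 + β)) * (x - (x ^ 2 - y ^ 2) / β) := by
      have hsq : z ^ 2 = Complex.mk (x^2 - y^2) (2*x*y) := by
        apply Complex.ext <;> simp [pow_two, Complex.mul_re, Complex.mul_im] <;> ring
      rw [hsq]
      simp only [Complex.mul_re, Complex.ofReal_re, Complex.ofReal_im, Complex.sub_re,
        Complex.sub_im, Complex.div_ofReal_re, Complex.div_ofReal_im]
      simp
      exact Or.inl rfl
    rw [hre]
    have key : β * x - x ^ 2 + y ^ 2 + (1 + β) ≥ 0 := by
      have hx1 : -1 < x := by nlinarith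
      have hx2 : x < 1 := by nlinarith
      nlinarith [mul_pos (by linarith : (0:ℝ) < 1 + x) (by linarith : (0:ℝ) < 1 + β - x)]
    have heq : β / (2 * (1 + β)) * (x - (x ^ 2 - y ^ 2) / β)
        = (β * x - x ^ 2 + y ^ 2) / (2 * (1 + β)) := by
      field_simp
      ring
    rw [heq, le_div_iff₀ hb2]
    linarith
  · intro b hbnd
    set g : ℝ → ℝ := fun t => β / (2 * (1 + β)) * (-t - t ^ 2 / β) with hg
    have hlim : Filter.Tendsto g (nhdsWithin 1 (Set.Iio 1)) (nhds (-(1/2))) := by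
      have hc : Continuous g := by fun_prop
      have h := (hc.tendsto 1).mono_left (nhdsWithin_le_nhds (s := Set.Iio 1))
      have hval : g 1 = -(1/2) := by
        simp only [hg]
        field_simp
        ring
      rwa [hval] at h
    refine ge_of_tendsto hlim ?_
    filter_upwards [Ioo_mem_nhdsLT_of_mem
      (show (1:ℝ) ∈ Set.Ioc 0 1 by constructor <;> norm_num)] with t ht
    have hmem : (-(t:ℝ) : ℂ) ∈ ball (0:ℂ) 1 := by
      rw [mem_ball_zero_iff]
      simp [abs_of_pos ht.1, ht.2]
    have h2 : b ≤ ((((β / (2 * (1 + β)) : ℝ) : ℂ)) *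
        ((-(t:ℝ):ℂ) - (-(t:ℝ):ℂ) ^ 2 / (β:ℂ))).re := hbnd ⟨_, hmem, rfl⟩
    have hEq : ((((β / (2 * (1 + β)) : ℝ) : ℂ)) *
        ((-(t:ℝ):ℂ) - (-(t:ℝ):ℂ) ^ 2 / (β:ℂ))).re = g t := by
      rw [show ((-(t:ℝ):ℂ) - (-(t:ℝ):ℂ) ^ 2 / (β:ℂ)) = ((-t - t^2/β : ℝ):ℂ) by
        push_cast; ring]
      rw [← Complex.ofReal_mul, Complex.ofReal_re]
    rw [← hEq]
    exact h2
end

section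
/- Let Φ > 0, 0 ≤ α < 1, and let f(z) = z + ∑_{n≥2} a_n z^n be analytic on the unit disc with ∑_{n≥2} Φ_n |a_n| ≤ 1 - α where Φ_n ≥ Φ = Φ_2 for all n ≥ 2. Then Re f(z) > -(1 - α + Φ)/Φ for all z in the unit disc. -/
/-!
Since `Φ ≤ Φₙ`, the coefficient condition gives `∑_{n≥2} |aₙ| ≤ (1 - α)/Φ`, so on the unit disc
`|f(z) - z| ≤ (1 - α)/Φ`, and `Re f(z) ≥ Re z - |f(z) - z| > -1 - (1 - α)/Φ = -(1 - α + Φ)/Φ`.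
-/

open Metric

section WeightedSums

variable {ι : Type*} {c : ℝ} {w u : ι → ℝ}

theorem le_inv_mul_weight_mul (hc : 0 < c) (hw : ∀ i, c ≤ w i) (hu : ∀ i, 0 ≤ u i) (i : ι) :
    u i ≤ c⁻¹ * (w i * u i) := by
  rw [le_inv_mul_iff₀ hc]
  exact mul_le_mul_of_nonneg_right (hw i) (hu i)

theorem Summable.of_weight_ge (hc : 0 < c) (hw : ∀ i, c ≤ w i) (hu : ∀ i, 0 ≤ u i)
    (hs : Summable fun i => w i * u i) : Summable u :=
  (hs.mul_left c⁻¹).of_nonneg_of_le hu (le_inv_mul_weight_mul hc hw hu)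

theorem tsum_le_tsum_weight_mul_div (hc : 0 < c) (hw : ∀ i, c ≤ w i) (hu : ∀ i, 0 ≤ u i)
    (hs : Summable fun i => w i * u i) : ∑' i, u i ≤ (∑' i, w i * u i) / c :=
  calc ∑' i, u i ≤ ∑' i, c⁻¹ * (w i * u i) :=
        (hs.of_weight_ge hc hw hu).tsum_le_tsum (le_inv_mul_weight_mul hc hw hu) (hs.mul_left _)
    _ = (∑' i, w i * u i) / c := by rw [tsum_mul_left, inv_mul_eq_div]

end WeightedSums

theorem norm_le_tsum_norm_coeff_of_norm_le_one {𝕜 : Type*} [NormedDivisionRing 𝕜]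
    {b : ℕ → 𝕜} {z s : 𝕜} (k : ℕ) (hz : ‖z‖ ≤ 1)
    (hs : HasSum (fun n => b n * z ^ (n + k)) s) (hb : Summable fun n => ‖b n‖) :
    ‖s‖ ≤ ∑' n, ‖b n‖ :=
  hs.norm_le_of_bounded hb.hasSum fun n => by
    rw [norm_mul, norm_pow]
    exact mul_le_of_le_one_right (norm_nonneg _) (pow_le_one₀ (norm_nonneg _) hz)

theorem Complex.neg_one_sub_norm_sub_lt_re {z : ℂ} (w : ℂ) (hz : ‖z‖ < 1) :
    -1 - ‖w - z‖ < w.re := by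
  have hzw : (z - w).re ≤ ‖w - z‖ := norm_sub_rev w z ▸ (z - w).re_le_norm
  have hz_re : -z.re ≤ ‖z‖ := by simpa using (-z).re_le_norm
  simp only [Complex.sub_re] at hzw
  linarith

theorem re_lower_bound_general (Φ α : ℝ) (hΦ : 0 < Φ)
    (Φn : ℕ → ℝ) (hΦn : ∀ n : ℕ, 2 ≤ n → Φ ≤ Φn n)
    (a : ℕ → ℂ) (ha0 : a 0 = 0) (ha1 : a 1 = 1)
    (f : ℂ → ℂ)
    (hf : ∀ z ∈ ball (0 : ℂ) 1, HasSum (fun n : ℕ => a n * z ^ n) (f z))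
    (hsum : Summable (fun n : ℕ => Φn (n + 2) * ‖a (n + 2)‖))
    (hbound : (∑' n : ℕ, Φn (n + 2) * ‖a (n + 2)‖) ≤ 1 - α) :
    ∀ z ∈ ball (0 : ℂ) 1, -((1 - α + Φ) / Φ) < (f z).re := by
  intro z hz
  have hz1 : ‖z‖ < 1 := mem_ball_zero_iff.mp hz
  have hΦ_le : ∀ n, Φ ≤ Φn (n + 2) := fun n => hΦn (n + 2) (Nat.le_add_left 2 n)
  have htail : HasSum (fun n => a (n + 2) * z ^ (n + 2)) (f z - z) := by
    simpa [Finset.sum_range_succ, ha0, ha1] using (hasSum_nat_add_iff' 2).2 (hf z hz)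
  have hnorm : ‖f z - z‖ ≤ (1 - α) / Φ :=
    calc ‖f z - z‖ ≤ ∑' n, ‖a (n + 2)‖ :=
          norm_le_tsum_norm_coeff_of_norm_le_one 2 hz1.le htail
            (hsum.of_weight_ge hΦ hΦ_le fun _ => norm_nonneg _)
      _ ≤ (∑' n, Φn (n + 2) * ‖a (n + 2)‖) / Φ :=
          tsum_le_tsum_weight_mul_div hΦ hΦ_le (fun _ => norm_nonneg _) hsum
      _ ≤ (1 - α) / Φ := by gcongr
  calc -((1 - α + Φ) / Φ) = -1 - (1 - α) / Φ := by field_simp; ring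
    _ ≤ -1 - ‖f z - z‖ := by linarith
    _ < (f z).re := Complex.neg_one_sub_norm_sub_lt_re _ hz1

/-- The real-part lower bound `Re f(z) > -(1 - α + Φ)/Φ` from the
subordination theorem. -/
theorem re_lower_bound (Φ α : ℝ) (hΦ : 0 < Φ) (hα0 : 0 ≤ α) (hα1 : α < 1)
    (Φn : ℕ → ℝ) (hΦn : ∀ n : ℕ, 2 ≤ n → Φ ≤ Φn n)
    (a : ℕ → ℂ) (ha0 : a 0 = 0) (ha1 : a 1 = 1)
    (f : ℂ → ℂ)
    (hf : ∀ z ∈ ball (0 : ℂ) 1, HasSum (fun n : ℕ => a n * z ^ n) (f z))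
    (hsum : Summable (fun n : ℕ => Φn (n + 2) * ‖a (n + 2)‖))
    (hbound : (∑' n : ℕ, Φn (n + 2) * ‖a (n + 2)‖) ≤ 1 - α) :
    ∀ z ∈ ball (0 : ℂ) 1, -((1 - α + Φ) / Φ) < (f z).re :=
  re_lower_bound_general Φ α hΦ Φn hΦn a ha0 ha1 f hf hsum hbound
end
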